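/- arXiv:2010.05674 — 14 statements merged into one kernel-verified Lean document; each statement's English description precedes it below -/
import Mathlib

section
/- If f : [0,∞) → [0,∞) is continuous with f(0) = 0 and x ↦ f(x^(1/p)) is convex on [0,∞) for some p ≥ 1, then f itself is convex on [0,∞). -/
/-!
Write `f t = g (t ^ p)` with `g x = f (x ^ (1 / p))`. A convex function attaining its minimum at
the left end of a half-line is monotone there; since `g 0 = 0 ≤ g`, this makes `g` a monotone
convex function, and composing it with the convex map `t ↦ t ^ p` (here `p ≥ 1` is used) gives
a convex function.
-/

open Set

theorem ConvexOn.monotoneOn_of_isMinOn {𝕜 β : Type*} [Field 𝕜] [LinearOrder 𝕜]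
    [IsStrictOrderedRing 𝕜] [AddCommMonoid β] [LinearOrder β] [IsOrderedAddMonoid β]
    [Module 𝕜 β] [PosSMulStrictMono 𝕜 β] {s : Set 𝕜} {g : 𝕜 → β} {a : 𝕜}
    (hg : ConvexOn 𝕜 s g) (ha : a ∈ s) (hmin : IsMinOn g s a) :
    MonotoneOn g (s ∩ Ici a) := by
  rintro x ⟨-, hax⟩ y ⟨hy, -⟩ hxy
  have hx_mem : x ∈ segment 𝕜 a y := Icc_subset_segment ⟨hax, hxy⟩
  exact (hg.le_on_segment ha hy hx_mem).trans (max_le (hmin hy) le_rfl)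

theorem ConvexOn.comp_rpow {g : ℝ → ℝ} {p : ℝ} (hg : ConvexOn ℝ (Ici 0) g)
    (hg_mono : MonotoneOn g (Ici 0)) (hp : 1 ≤ p) :
    ConvexOn ℝ (Ici 0) fun x => g (x ^ p) := by
  have himage : (fun x : ℝ => x ^ p) '' Ici 0 = Ici 0 := by
    refine (image_subset_iff.2 fun x hx => Real.rpow_nonneg hx p).antisymm fun y hy => ?_
    exact ⟨y ^ p⁻¹, Real.rpow_nonneg hy _, Real.rpow_inv_rpow hy (by positivity)⟩
  rw [← himage] at hg hg_mono
  exact hg.comp (convexOn_rpow hp) hg_mono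

theorem radical_convex_convex_general (f : ℝ → ℝ) (p : ℝ) (hp : 1 ≤ p)
    (hmap : ∀ x ∈ Set.Ici (0:ℝ), 0 ≤ f x)
    (hf0 : f 0 = 0)
    (hconv : ConvexOn ℝ (Set.Ici 0) (fun x => f (x ^ (1/p)))) :
    ConvexOn ℝ (Set.Ici 0) f := by
  have hp0 : p ≠ 0 := by positivity
  have hmin : IsMinOn (fun x => f (x ^ (1 / p))) (Ici 0) 0 := fun x hx => by
    simp only [mem_ofPred_eq, Real.zero_rpow (one_div_ne_zero hp0), hf0]
    exact hmap _ (Real.rpow_nonneg hx _)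
  have hmono := hconv.monotoneOn_of_isMinOn self_mem_Ici hmin
  rw [inter_self] at hmono
  refine (hconv.comp_rpow hmono hp).congr fun x hx => ?_
  simp only [one_div, Real.rpow_rpow_inv (mem_Ici.1 hx) hp0]

theorem radical_convex_convex (f : ℝ → ℝ) (p : ℝ) (hp : 1 ≤ p)
    (hmap : ∀ x ∈ Set.Ici (0:ℝ), 0 ≤ f x)
    (hcont : ContinuousOn f (Set.Ici 0))
    (hf0 : f 0 = 0)
    (hconv : ConvexOn ℝ (Set.Ici 0) (fun x => f (x ^ (1/p)))) :
    ConvexOn ℝ (Set.Ici 0) f :=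
  radical_convex_convex_general f p hp hmap hf0 hconv
end

section
/- If f is p-radical convex for some p ≥ 1, then f is q-radical convex for every q with 1 ≤ q ≤ p, i.e., the function x ↦ f(x^(1/q)) is convex on [0,∞). -/
/-!
With `g y = f (y ^ (1/p))` we have `f (x ^ (1/q)) = g (x ^ (p/q))`. The function `g` is convex on
`[0, ∞)` and minimal at `0` (since `g 0 = f 0 = 0 ≤ g`), hence nondecreasing there; composing it
with the convex map `x ↦ x ^ (p/q)`, `p/q ≥ 1`, preserves convexity.
-/

open Set

theorem ConvexOn.comp_of_mapsTo {𝕜 E β α : Type*} [Semiring 𝕜] [PartialOrder 𝕜]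
    [AddCommMonoid E] [AddCommMonoid β] [PartialOrder β] [AddCommMonoid α] [PartialOrder α]
    [SMul 𝕜 E] [SMul 𝕜 β] [SMul 𝕜 α] {s : Set E} {t : Set β} {f : E → β} {g : β → α}
    (hg : ConvexOn 𝕜 t g) (hf : ConvexOn 𝕜 s f) (hg' : MonotoneOn g t) (hst : MapsTo f s t) :
    ConvexOn 𝕜 s (g ∘ f) :=
  ⟨hf.1, fun _ hx _ hy _ _ ha hb hab =>
    (hg' (hst (hf.1 hx hy ha hb hab)) (hg.1 (hst hx) (hst hy) ha hb hab)
      (hf.2 hx hy ha hb hab)).trans (hg.2 (hst hx) (hst hy) ha hb hab)⟩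

theorem ConvexOn.monotoneOn_Ici_of_isMinOn {𝕜 β : Type*} [Field 𝕜] [LinearOrder 𝕜]
    [IsStrictOrderedRing 𝕜] [AddCommMonoid β] [LinearOrder β] [IsOrderedAddMonoid β]
    [Module 𝕜 β] [PosSMulStrictMono 𝕜 β] {a : 𝕜} {g : 𝕜 → β}
    (hg : ConvexOn 𝕜 (Ici a) g) (hmin : IsMinOn g (Ici a) a) : MonotoneOn g (Ici a) :=
  fun u hu v hv huv =>
    calc g u ≤ max (g a) (g v) :=
          hg.le_on_segment self_mem_Ici hv (by rw [segment_eq_Icc (hu.trans huv)]; exact ⟨hu, huv⟩)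
      _ = g v := max_eq_right (hmin hv)

theorem radical_convex_lower_exponent_general (f : ℝ → ℝ) (p q : ℝ) (hq : 1 ≤ q) (hqp : q ≤ p)
    (hmap : ∀ x ∈ Set.Ici (0:ℝ), 0 ≤ f x)
    (hf0 : f 0 = 0)
    (hconv : ConvexOn ℝ (Set.Ici 0) (fun x => f (x ^ (1/p)))) :
    ConvexOn ℝ (Set.Ici 0) (fun x => f (x ^ (1/q))) := by
  have hq0 : 0 < q := one_pos.trans_le hq
  have hp0 : 0 < p := hq0.trans_le hqp
  have hmin : IsMinOn (fun y : ℝ => f (y ^ (1/p))) (Ici 0) 0 := fun y hy => by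
    show f (0 ^ (1/p)) ≤ f (y ^ (1/p))
    rw [Real.zero_rpow (one_div_pos.2 hp0).ne', hf0]
    exact hmap _ (Real.rpow_nonneg hy _)
  have hcomp := hconv.comp_of_mapsTo (convexOn_rpow ((one_le_div hq0).2 hqp))
    (hconv.monotoneOn_Ici_of_isMinOn hmin) fun x hx => Real.rpow_nonneg hx (p / q)
  refine hcomp.congr fun x hx => ?_
  simp only [Function.comp, ← Real.rpow_mul hx]
  congr 2
  field_simp

theorem radical_convex_lower_exponent (f : ℝ → ℝ) (p q : ℝ) (hq : 1 ≤ q) (hqp : q ≤ p)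
    (hmap : ∀ x ∈ Set.Ici (0:ℝ), 0 ≤ f x)
    (hcont : ContinuousOn f (Set.Ici 0))
    (hf0 : f 0 = 0)
    (hconv : ConvexOn ℝ (Set.Ici 0) (fun x => f (x ^ (1/p)))) :
    ConvexOn ℝ (Set.Ici 0) (fun x => f (x ^ (1/q))) :=
  radical_convex_lower_exponent_general f p q hq hqp hmap hf0 hconv
end

section
/- The function f(x) = e^x − 1 − x is 2-radical convex on [0,∞), i.e., x ↦ e^(√x) − 1 − √x is convex on [0,∞). -/
/-!
Expanding the exponential, `exp √x - 1 - √x = ∑_{n ≥ 2} x ^ (n / 2) / n!`. Every term is a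
nonnegative multiple of a power `x ^ p` with `p ≥ 1`, hence convex on `[0, ∞)`, and a pointwise
convergent series of convex functions is convex.
-/

open Real Set

theorem ConvexOn.tsum {𝕜 E β ι : Type*} [Semiring 𝕜] [PartialOrder 𝕜] [AddCommMonoid E]
    [SMul 𝕜 E] [AddCommMonoid β] [PartialOrder β] [IsOrderedAddMonoid β] [Module 𝕜 β]
    [TopologicalSpace β] [OrderClosedTopology β] [ContinuousAdd β] [ContinuousConstSMul 𝕜 β]
    {s : Set E} {f : ι → E → β} (hf : ∀ i, ConvexOn 𝕜 s (f i))
    (hsum : ∀ x ∈ s, Summable fun i => f i x) (hs : Convex 𝕜 s) :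
    ConvexOn 𝕜 s fun x => ∑' i, f i x := by
  refine ⟨hs, fun x hx y hy a b ha hb hab => ?_⟩
  exact hasSum_le (fun i => (hf i).2 hx hy ha hb hab) (hsum _ (hs hx hy ha hb hab)).hasSum
    (((hsum x hx).hasSum.const_smul a).add ((hsum y hy).hasSum.const_smul b))

theorem Real.hasSum_exp_sub_one_sub (t : ℝ) :
    HasSum (fun n : ℕ => t ^ (n + 2) / (n + 2).factorial) (exp t - 1 - t) := by
  have h := NormedSpace.expSeries_div_hasSum_exp t
  rw [← exp_eq_exp_ℝ, ← hasSum_nat_add_iff' 2] at h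
  simpa [Finset.sum_range_succ, sub_sub] using h

theorem convexOn_sqrt_pow {n : ℕ} (hn : 2 ≤ n) : ConvexOn ℝ (Ici 0) fun x => √x ^ n := by
  have hp : (1 : ℝ) ≤ n / 2 := by
    rw [le_div_iff₀ two_pos]
    exact_mod_cast hn
  refine (convexOn_rpow hp).congr fun x (hx : 0 ≤ x) => ?_
  rw [sqrt_eq_rpow, ← rpow_natCast, ← rpow_mul hx]
  ring_nf

theorem exp_sub_one_sub_id_two_radical_convex :
    ConvexOn ℝ (Set.Ici 0) (fun x => Real.exp (Real.sqrt x) - 1 - Real.sqrt x) := by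
  have hterm (n : ℕ) : ConvexOn ℝ (Ici 0) fun x => √x ^ (n + 2) / (n + 2).factorial := by
    simpa only [smul_eq_mul, div_eq_inv_mul] using
      (convexOn_sqrt_pow (Nat.le_add_left 2 n)).smul (c := ((n + 2).factorial : ℝ)⁻¹)
        (by positivity)
  exact (ConvexOn.tsum hterm (fun x _ => (hasSum_exp_sub_one_sub √x).summable)
    (convex_Ici 0)).congr fun x _ => (hasSum_exp_sub_one_sub √x).tsum_eq
end

section
/- If f is 2-radical convex, then for all a, b ≥ 0 and t ∈ [0,1]: f((1−t)a + tb) + f(√(t(1−t)) |a − b|) ≤ (1−t) f(a) + t f(b). -/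
/-!
Put `g x = f (√x)`. A convex function on `[0, ∞)` with `g 0 ≤ 0` is superadditive, and with
`c = (1 - t) a + t b`, `d = √(t (1 - t)) |a - b|` the variance identity
`c² + d² = (1 - t) a² + t b²` holds. Hence
`f c + f d = g (c²) + g (d²) ≤ g ((1 - t) a² + t b²) ≤ (1 - t) g (a²) + t g (b²) = (1 - t) f a + t f b`.
-/

open Set

namespace ConvexOn

variable {g : ℝ → ℝ}

theorem map_mul_le_mul (hg : ConvexOn ℝ (Ici 0) g) (hg0 : g 0 ≤ 0) {θ x : ℝ}
    (hθ0 : 0 ≤ θ) (hθ1 : θ ≤ 1) (hx : 0 ≤ x) : g (θ * x) ≤ θ * g x := by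
  have h := hg.2 (mem_Ici.mpr hx) (mem_Ici.mpr le_rfl) hθ0 (sub_nonneg.mpr hθ1)
    (add_sub_cancel θ 1)
  simp only [smul_eq_mul, mul_zero, add_zero] at h
  nlinarith

theorem add_le_map_add (hg : ConvexOn ℝ (Ici 0) g) (hg0 : g 0 ≤ 0) {u v : ℝ}
    (hu : 0 ≤ u) (hv : 0 ≤ v) : g u + g v ≤ g (u + v) := by
  rcases (add_nonneg hu hv).eq_or_lt with hs | hs
  · obtain ⟨rfl, rfl⟩ : u = 0 ∧ v = 0 := ⟨by linarith, by linarith⟩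
    simpa using hg0
  · have hu' : g u ≤ u / (u + v) * g (u + v) := by
      simpa [div_mul_cancel₀ u hs.ne'] using hg.map_mul_le_mul hg0 (div_nonneg hu hs.le)
        (div_le_one_of_le₀ (le_add_of_nonneg_right hv) hs.le) hs.le
    have hv' : g v ≤ v / (u + v) * g (u + v) := by
      simpa [div_mul_cancel₀ v hs.ne'] using hg.map_mul_le_mul hg0 (div_nonneg hv hs.le)
        (div_le_one_of_le₀ (le_add_of_nonneg_left hu) hs.le) hs.le
    calc g u + g v ≤ (u / (u + v) + v / (u + v)) * g (u + v) := by linarith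
      _ = g (u + v) := by rw [← add_div, div_self hs.ne', one_mul]

end ConvexOn

theorem two_radical_convex_refinement_general (f : ℝ → ℝ)
    (hf0 : f 0 = 0)
    (hconv : ConvexOn ℝ (Set.Ici 0) (fun x => f (Real.sqrt x)))
    (a b : ℝ) (ha : 0 ≤ a) (hb : 0 ≤ b) (t : ℝ) (ht : t ∈ Set.Icc (0:ℝ) 1) :
    f ((1 - t) * a + t * b) + f (Real.sqrt (t * (1 - t)) * |a - b|)
      ≤ (1 - t) * f a + t * f b := by
  obtain ⟨ht0, ht1⟩ := ht
  set g : ℝ → ℝ := fun x => f (Real.sqrt x)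
  have hf_eq {x : ℝ} (hx : 0 ≤ x) : f x = g (x ^ 2) := by simp only [g, Real.sqrt_sq hx]
  set c := (1 - t) * a + t * b
  set d := Real.sqrt (t * (1 - t)) * |a - b|
  have hc : 0 ≤ c := by positivity
  have hd : 0 ≤ d := by positivity
  have hvariance : c ^ 2 + d ^ 2 = (1 - t) * a ^ 2 + t * b ^ 2 := by
    rw [mul_pow, Real.sq_sqrt (mul_nonneg ht0 (sub_nonneg.mpr ht1)), sq_abs]
    ring
  calc f c + f d = g (c ^ 2) + g (d ^ 2) := by rw [hf_eq hc, hf_eq hd]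
    _ ≤ g (c ^ 2 + d ^ 2) := hconv.add_le_map_add (by simp [g, hf0]) (sq_nonneg c) (sq_nonneg d)
    _ ≤ (1 - t) * g (a ^ 2) + t * g (b ^ 2) := by
      rw [hvariance]
      exact hconv.2 (sq_nonneg a) (sq_nonneg b) (sub_nonneg.mpr ht1) ht0 (sub_add_cancel 1 t)
    _ = (1 - t) * f a + t * f b := by rw [hf_eq ha, hf_eq hb]

theorem two_radical_convex_refinement (f : ℝ → ℝ)
    (hmap : ∀ x ∈ Set.Ici (0:ℝ), 0 ≤ f x)
    (hcont : ContinuousOn f (Set.Ici 0))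
    (hf0 : f 0 = 0)
    (hconv : ConvexOn ℝ (Set.Ici 0) (fun x => f (Real.sqrt x)))
    (a b : ℝ) (ha : 0 ≤ a) (hb : 0 ≤ b) (t : ℝ) (ht : t ∈ Set.Icc (0:ℝ) 1) :
    f ((1 - t) * a + t * b) + f (Real.sqrt (t * (1 - t)) * |a - b|)
      ≤ (1 - t) * f a + t * f b :=
  two_radical_convex_refinement_general f hf0 hconv a b ha hb t ht
end

section
/- If f is 2-radical convex, then for all a, b ≥ 0: f((a+b)/2) + f(|a−b|/2) ≤ (f(a) + f(b))/2. -/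
/-!
Put `g x = f (√x)`, so that `f x = g (x ^ 2)` for `x ≥ 0`. A convex `g` on `[0, ∞)` with
`g 0 = 0` is superadditive, and `((a + b) / 2) ^ 2 + (|a - b| / 2) ^ 2 = (a ^ 2 + b ^ 2) / 2`;
so the left side is at most `g ((a ^ 2 + b ^ 2) / 2)`, which midpoint convexity bounds by
`(g (a ^ 2) + g (b ^ 2)) / 2`.
-/

open Set

theorem ConvexOn.map_smul_le {E : Type*} [AddCommGroup E] [Module ℝ E] {s : Set E} {g : E → ℝ}
    (hg : ConvexOn ℝ s g) (h0s : 0 ∈ s) (hg0 : g 0 ≤ 0) {x : E} (hx : x ∈ s) {t : ℝ}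
    (ht0 : 0 ≤ t) (ht1 : t ≤ 1) : g (t • x) ≤ t * g x := by
  have h := hg.2 hx h0s ht0 (sub_nonneg.2 ht1) (add_sub_cancel t 1)
  simp only [smul_zero, add_zero, smul_eq_mul] at h
  nlinarith

theorem ConvexOn.add_le_map_add_s10 {g : ℝ → ℝ} (hg : ConvexOn ℝ (Ici 0) g) (hg0 : g 0 ≤ 0)
    {u v : ℝ} (hu : 0 ≤ u) (hv : 0 ≤ v) : g u + g v ≤ g (u + v) := by
  rcases (add_nonneg hu hv).eq_or_lt with huv | huv
  · obtain ⟨rfl, rfl⟩ : u = 0 ∧ v = 0 := ⟨by linarith, by linarith⟩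
    rw [add_zero]
    linarith
  have hscale : ∀ w, 0 ≤ w → w ≤ u + v → g w ≤ w / (u + v) * g (u + v) := fun w hw hwuv => by
    have h := hg.map_smul_le self_mem_Ici hg0 (mem_Ici.2 huv.le) (div_nonneg hw huv.le)
      ((div_le_one huv).2 hwuv)
    rwa [smul_eq_mul, div_mul_cancel₀ w huv.ne'] at h
  calc g u + g v ≤ u / (u + v) * g (u + v) + v / (u + v) * g (u + v) :=
        add_le_add (hscale u hu (by linarith)) (hscale v hv (by linarith))
    _ = g (u + v) := by field_simp

theorem ConvexOn.map_add_div_two_le {s : Set ℝ} {g : ℝ → ℝ} (hg : ConvexOn ℝ s g) {x y : ℝ}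
    (hx : x ∈ s) (hy : y ∈ s) : g ((x + y) / 2) ≤ (g x + g y) / 2 := by
  have h := hg.2 hx hy (by norm_num : (0 : ℝ) ≤ 1 / 2) (by norm_num : (0 : ℝ) ≤ 1 / 2)
    (by norm_num)
  simp only [smul_eq_mul] at h
  rw [show (x + y) / 2 = 1 / 2 * x + 1 / 2 * y by ring]
  linarith

theorem two_radical_convex_midpoint_general (f : ℝ → ℝ)
    (hf0 : f 0 = 0)
    (hconv : ConvexOn ℝ (Set.Ici 0) (fun x => f (Real.sqrt x)))
    (a b : ℝ) (ha : 0 ≤ a) (hb : 0 ≤ b) :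
    f ((a + b) / 2) + f (|a - b| / 2) ≤ (f a + f b) / 2 := by
  set g : ℝ → ℝ := fun x => f (Real.sqrt x)
  have hfg : ∀ x, 0 ≤ x → f x = g (x ^ 2) := fun x hx => by simp only [g, Real.sqrt_sq hx]
  have hsq : ((a + b) / 2) ^ 2 + (|a - b| / 2) ^ 2 = (a ^ 2 + b ^ 2) / 2 := by
    rw [div_pow, div_pow, sq_abs]; ring
  rw [hfg ((a + b) / 2) (by positivity), hfg (|a - b| / 2) (by positivity), hfg a ha, hfg b hb]
  calc g (((a + b) / 2) ^ 2) + g ((|a - b| / 2) ^ 2) ≤ g ((a ^ 2 + b ^ 2) / 2) :=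
        hsq ▸ hconv.add_le_map_add_s10 (by simp [g, hf0]) (by positivity) (by positivity)
    _ ≤ (g (a ^ 2) + g (b ^ 2)) / 2 :=
        hconv.map_add_div_two_le (mem_Ici.2 (sq_nonneg a)) (mem_Ici.2 (sq_nonneg b))

theorem two_radical_convex_midpoint (f : ℝ → ℝ)
    (hmap : ∀ x ∈ Set.Ici (0:ℝ), 0 ≤ f x)
    (hcont : ContinuousOn f (Set.Ici 0))
    (hf0 : f 0 = 0)
    (hconv : ConvexOn ℝ (Set.Ici 0) (fun x => f (Real.sqrt x)))
    (a b : ℝ) (ha : 0 ≤ a) (hb : 0 ≤ b) :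
    f ((a + b) / 2) + f (|a - b| / 2) ≤ (f a + f b) / 2 :=
  two_radical_convex_midpoint_general f hf0 hconv a b ha hb
end

section
/- If f is 2-radical convex, then for t ∈ [0,1]: f(t) ≤ f(1)·t − f(√(t(1−t))) ≤ f(1)·t. -/
/-!
Write `g x = f (√x)`. A convex function vanishing at `0` satisfies `g (c x) ≤ c g x` for
`c ∈ [0, 1]`, hence is superadditive on `[0, ∞)`. Splitting `t = t² + t(1 - t)` gives
`f t + f √(t(1 - t)) = g (t²) + g (t(1 - t)) ≤ g t ≤ t g 1 = t f 1`; the second inequality is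
just `f ≥ 0`.
-/

open Set

theorem ConvexOn.map_smul_le_of_map_zero {𝕜 E β : Type*} [Ring 𝕜] [PartialOrder 𝕜]
    [IsOrderedRing 𝕜] [AddCommMonoid E] [Module 𝕜 E] [AddCommMonoid β] [PartialOrder β]
    [IsOrderedAddMonoid β] [Module 𝕜 β] {s : Set E} {g : E → β} (hg : ConvexOn 𝕜 s g)
    (h0 : (0 : E) ∈ s) (hg0 : g 0 = 0) {x : E} (hx : x ∈ s) {c : 𝕜} (hc0 : 0 ≤ c)
    (hc1 : c ≤ 1) : g (c • x) ≤ c • g x := by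
  simpa [hg0] using hg.2 hx h0 hc0 (sub_nonneg.2 hc1) (add_sub_cancel c 1)

theorem ConvexOn.add_le_map_add_of_map_zero {𝕜 β : Type*} [Field 𝕜] [LinearOrder 𝕜]
    [IsStrictOrderedRing 𝕜] [AddCommMonoid β] [PartialOrder β] [IsOrderedAddMonoid β]
    [Module 𝕜 β] {g : 𝕜 → β} (hg : ConvexOn 𝕜 (Ici 0) g) (hg0 : g 0 = 0) {a b : 𝕜}
    (ha : 0 ≤ a) (hb : 0 ≤ b) : g a + g b ≤ g (a + b) := by
  rcases (add_nonneg ha hb).eq_or_lt with hab | hab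
  · obtain ⟨rfl, rfl⟩ : a = 0 ∧ b = 0 := ⟨by linarith, by linarith⟩
    simp [hg0]
  have hscale : ∀ x, 0 ≤ x → x ≤ a + b → g x ≤ (x / (a + b)) • g (a + b) := fun x hx hxab => by
    simpa [div_mul_cancel₀ x hab.ne'] using
      hg.map_smul_le_of_map_zero self_mem_Ici hg0 (mem_Ici.2 hab.le)
        (div_nonneg hx hab.le) ((div_le_one hab).2 hxab)
  calc g a + g b
      ≤ (a / (a + b)) • g (a + b) + (b / (a + b)) • g (a + b) :=
        add_le_add (hscale a ha (by linarith)) (hscale b hb (by linarith))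
    _ = g (a + b) := by rw [← add_smul, ← add_div, div_self hab.ne', one_smul]

theorem two_radical_convex_bound_general (f : ℝ → ℝ)
    (hmap : ∀ x ∈ Set.Ici (0:ℝ), 0 ≤ f x)
    (hf0 : f 0 = 0)
    (hconv : ConvexOn ℝ (Set.Ici 0) (fun x => f (Real.sqrt x)))
    (t : ℝ) (ht : t ∈ Set.Icc (0:ℝ) 1) :
    f t ≤ f 1 * t - f (Real.sqrt (t * (1 - t))) ∧
    f 1 * t - f (Real.sqrt (t * (1 - t))) ≤ f 1 * t := by
  obtain ⟨ht0, ht1⟩ := ht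
  have hg0 : f (Real.sqrt 0) = 0 := by rw [Real.sqrt_zero, hf0]
  have hsplit := hconv.add_le_map_add_of_map_zero hg0 (mul_nonneg ht0 ht0)
    (mul_nonneg ht0 (sub_nonneg.2 ht1))
  have hlin := hconv.map_smul_le_of_map_zero self_mem_Ici hg0 (mem_Ici.2 zero_le_one) ht0 ht1
  have hnonneg := hmap _ (Real.sqrt_nonneg (t * (1 - t)))
  simp only [Real.sqrt_mul_self ht0, show t * t + t * (1 - t) = t by ring, smul_eq_mul,
    mul_one, Real.sqrt_one] at hsplit hlin
  constructor <;> linarith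

theorem two_radical_convex_bound (f : ℝ → ℝ)
    (hmap : ∀ x ∈ Set.Ici (0:ℝ), 0 ≤ f x)
    (hcont : ContinuousOn f (Set.Ici 0))
    (hf0 : f 0 = 0)
    (hconv : ConvexOn ℝ (Set.Ici 0) (fun x => f (Real.sqrt x)))
    (t : ℝ) (ht : t ∈ Set.Icc (0:ℝ) 1) :
    f t ≤ f 1 * t - f (Real.sqrt (t * (1 - t))) ∧
    f 1 * t - f (Real.sqrt (t * (1 - t))) ≤ f 1 * t :=
  two_radical_convex_bound_general f hmap hf0 hconv t ht
end

section
/- Let f be 2-radical convex, x₁,…,xₙ ≥ 0, and w₁,…,wₙ ∈ [0,1] with ∑ wᵢ = 1. Then f(∑ wᵢ xᵢ) ≤ ∑ᵢ wᵢ [ f((∑ⱼ wⱼ xⱼ + xᵢ)/2) + f(|∑ⱼ wⱼ xⱼ − xᵢ|/2) ] ≤ ∑ᵢ wᵢ f(xᵢ). -/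
/-!
Let `g = f ∘ √`, so `f t = g (t ^ 2)` for `t ≥ 0`. Being convex with its minimum at `0`, `g` is
monotone, hence `f = g ∘ (· ^ 2)` is convex; Jensen for `f` at the points `(m + xᵢ) / 2`, whose
weighted mean is `m`, gives the first inequality. For the second, the parallelogram identity
`((a + b) / 2) ^ 2 + ((a - b) / 2) ^ 2 = (a ^ 2 + b ^ 2) / 2`, superadditivity of `g` (convex
with `g 0 ≤ 0`) and midpoint convexity of `g` give
`f ((a + b) / 2) + f (|a - b| / 2) ≤ (f a + f b) / 2`; averaging over `b = xᵢ` with `a = m` and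
applying Jensen to `f m` concludes.
-/

open Set

namespace ConvexOn

variable {g : ℝ → ℝ}

theorem monotoneOn_Ici_of_isMinOn_s12 (hg : ConvexOn ℝ (Ici 0) g) (hmin : IsMinOn g (Ici 0) 0) :
    MonotoneOn g (Ici 0) := by
  intro a ha b hb hab
  rcases (mem_Ici.1 ha).eq_or_lt with rfl | ha_pos
  · exact isMinOn_iff.1 hmin b hb
  have hb_pos : 0 < b := ha_pos.trans_le hab
  have hcomb : (a / b) • b + (1 - a / b) • (0 : ℝ) = a := by
    simp [div_mul_cancel₀ a hb_pos.ne']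
  have := hg.le_left_of_right_le' hb self_mem_Ici (div_pos ha_pos hb_pos)
    (sub_nonneg.2 (div_le_one_of_le₀ hab hb_pos.le)) (add_sub_cancel _ _)
    (by rw [hcomb]; exact isMinOn_iff.1 hmin a ha)
  rwa [hcomb] at this

theorem map_mul_le_of_map_zero_nonpos (hg : ConvexOn ℝ (Ici 0) g) (hg0 : g 0 ≤ 0) {t x : ℝ}
    (ht₀ : 0 ≤ t) (ht₁ : t ≤ 1) (hx : 0 ≤ x) : g (t * x) ≤ t * g x := by
  have := hg.2 (mem_Ici.2 hx) self_mem_Ici ht₀ (sub_nonneg.2 ht₁) (add_sub_cancel t 1)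
  simp only [smul_eq_mul, mul_zero, add_zero] at this
  nlinarith

theorem add_le_map_add_of_map_zero_nonpos (hg : ConvexOn ℝ (Ici 0) g) (hg0 : g 0 ≤ 0)
    {a b : ℝ} (ha : 0 ≤ a) (hb : 0 ≤ b) : g a + g b ≤ g (a + b) := by
  rcases (add_nonneg ha hb).eq_or_lt with hab | hab
  · obtain ⟨rfl, rfl⟩ : a = 0 ∧ b = 0 := ⟨by linarith, by linarith⟩
    simpa using hg0
  have hsplit (c : ℝ) (hc : 0 ≤ c) (hcab : c ≤ a + b) : g c ≤ c / (a + b) * g (a + b) := by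
    simpa [div_mul_cancel₀ c hab.ne'] using hg.map_mul_le_of_map_zero_nonpos hg0
      (div_nonneg hc hab.le) (div_le_one_of_le₀ hcab hab.le) hab.le
  calc g a + g b ≤ a / (a + b) * g (a + b) + b / (a + b) * g (a + b) :=
        add_le_add (hsplit a ha (by linarith)) (hsplit b hb (by linarith))
    _ = g (a + b) := by field_simp

end ConvexOn

section RadicalConvex

variable {f : ℝ → ℝ}

theorem convexOn_of_convexOn_comp_sqrt (hconv : ConvexOn ℝ (Ici 0) (fun x => f (√x)))
    (hmin : IsMinOn f (Ici 0) 0) : ConvexOn ℝ (Ici 0) f := by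
  have himage : (fun t : ℝ => t ^ 2) '' Ici 0 = Ici 0 := by
    ext y
    refine ⟨?_, fun hy => ⟨√y, Real.sqrt_nonneg y, Real.sq_sqrt hy⟩⟩
    rintro ⟨t, -, rfl⟩
    exact sq_nonneg t
  have hmin' : IsMinOn (fun x => f (√x)) (Ici 0) 0 :=
    isMinOn_iff.2 fun x _ => by simpa using isMinOn_iff.1 hmin (√x) (Real.sqrt_nonneg x)
  have hmono := hconv.monotoneOn_Ici_of_isMinOn_s12 hmin'
  rw [← himage] at hconv hmono
  exact (hconv.comp (convexOn_pow 2) hmono).congr fun t ht => by simp [Real.sqrt_sq (mem_Ici.1 ht)]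

theorem map_add_half_add_map_abs_sub_half_le (hconv : ConvexOn ℝ (Ici 0) (fun x => f (√x)))
    (hf0 : f 0 ≤ 0) {a b : ℝ} (ha : 0 ≤ a) (hb : 0 ≤ b) :
    f ((a + b) / 2) + f (|a - b| / 2) ≤ (f a + f b) / 2 := by
  have hsq (t : ℝ) (ht : 0 ≤ t) : f t = f √(t ^ 2) := by rw [Real.sqrt_sq ht]
  have hparallelogram :
      ((a + b) / 2) ^ 2 + (|a - b| / 2) ^ 2 = 1 / 2 * a ^ 2 + 1 / 2 * b ^ 2 := by
    rw [div_pow, div_pow, sq_abs]; ring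
  rw [hsq _ (by positivity), hsq (|a - b| / 2) (by positivity), hsq a ha, hsq b hb]
  calc f √(((a + b) / 2) ^ 2) + f √((|a - b| / 2) ^ 2)
      ≤ f √(((a + b) / 2) ^ 2 + (|a - b| / 2) ^ 2) :=
        hconv.add_le_map_add_of_map_zero_nonpos (by simpa using hf0) (sq_nonneg _) (sq_nonneg _)
    _ = f √(1 / 2 * a ^ 2 + 1 / 2 * b ^ 2) := by rw [hparallelogram]
    _ ≤ 1 / 2 * f √(a ^ 2) + 1 / 2 * f √(b ^ 2) :=
        hconv.2 (sq_nonneg a) (sq_nonneg b) (by norm_num) (by norm_num) (by norm_num)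
    _ = (f √(a ^ 2) + f √(b ^ 2)) / 2 := by ring

end RadicalConvex

theorem sum_mul_add_div_two {ι : Type*} (s : Finset ι) {w : ι → ℝ} (hw : ∑ i ∈ s, w i = 1)
    (c : ℝ) (p : ι → ℝ) : ∑ i ∈ s, w i * ((c + p i) / 2) = (c + ∑ i ∈ s, w i * p i) / 2 := by
  simp only [mul_div_assoc', mul_add, ← Finset.sum_div, Finset.sum_add_distrib, ← Finset.sum_mul,
    hw, one_mul]

theorem two_radical_convex_jensen_general (f : ℝ → ℝ)
    (hmap : ∀ x ∈ Set.Ici (0:ℝ), 0 ≤ f x)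
    (hf0 : f 0 = 0)
    (hconv : ConvexOn ℝ (Set.Ici 0) (fun x => f (Real.sqrt x)))
    (n : ℕ) (x w : Fin n → ℝ)
    (hx : ∀ i, 0 ≤ x i) (hw : ∀ i, w i ∈ Set.Icc (0:ℝ) 1)
    (hsum : ∑ i, w i = 1) :
    f (∑ i, w i * x i)
      ≤ ∑ i, w i * (f ((∑ j, w j * x j + x i) / 2) + f (|∑ j, w j * x j - x i| / 2)) ∧
    ∑ i, w i * (f ((∑ j, w j * x j + x i) / 2) + f (|∑ j, w j * x j - x i| / 2))
      ≤ ∑ i, w i * f (x i) := by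
  have hf : ConvexOn ℝ (Ici 0) f := convexOn_of_convexOn_comp_sqrt hconv <|
    isMinOn_iff.2 fun t ht => by simpa [hf0] using hmap t ht
  have hw₀ (i : Fin n) : 0 ≤ w i := (hw i).1
  set m := ∑ i, w i * x i
  have hm : 0 ≤ m := Finset.sum_nonneg fun i _ => mul_nonneg (hw₀ i) (hx i)
  have hjensen (p : Fin n → ℝ) (hp : ∀ i, 0 ≤ p i) : f (∑ i, w i * p i) ≤ ∑ i, w i * f (p i) := by
    simpa only [smul_eq_mul] using
      hf.map_sum_le (fun i _ => hw₀ i) hsum fun i _ => mem_Ici.2 (hp i)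
  have hmean : ∑ i, w i * ((m + x i) / 2) = m := by
    rw [sum_mul_add_div_two _ hsum]; ring
  constructor
  · calc f m = f (∑ i, w i * ((m + x i) / 2)) := by rw [hmean]
      _ ≤ ∑ i, w i * f ((m + x i) / 2) := hjensen _ fun i => by linarith [hx i]
      _ ≤ _ := Finset.sum_le_sum fun i _ => mul_le_mul_of_nonneg_left
          (le_add_of_nonneg_right (hmap _ (mem_Ici.2 (by positivity)))) (hw₀ i)
  · calc _ ≤ ∑ i, w i * ((f m + f (x i)) / 2) :=
          Finset.sum_le_sum fun i _ => mul_le_mul_of_nonneg_left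
            (map_add_half_add_map_abs_sub_half_le hconv hf0.le hm (hx i)) (hw₀ i)
      _ = (f m + ∑ i, w i * f (x i)) / 2 := sum_mul_add_div_two _ hsum _ _
      _ ≤ ∑ i, w i * f (x i) := by linarith [hjensen x hx]

theorem two_radical_convex_jensen (f : ℝ → ℝ)
    (hmap : ∀ x ∈ Set.Ici (0:ℝ), 0 ≤ f x)
    (hcont : ContinuousOn f (Set.Ici 0))
    (hf0 : f 0 = 0)
    (hconv : ConvexOn ℝ (Set.Ici 0) (fun x => f (Real.sqrt x)))
    (n : ℕ) (x w : Fin n → ℝ)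
    (hx : ∀ i, 0 ≤ x i) (hw : ∀ i, w i ∈ Set.Icc (0:ℝ) 1)
    (hsum : ∑ i, w i = 1) :
    f (∑ i, w i * x i)
      ≤ ∑ i, w i * (f ((∑ j, w j * x j + x i) / 2) + f (|∑ j, w j * x j - x i| / 2)) ∧
    ∑ i, w i * (f ((∑ j, w j * x j + x i) / 2) + f (|∑ j, w j * x j - x i| / 2))
      ≤ ∑ i, w i * f (x i) :=
  two_radical_convex_jensen_general f hmap hf0 hconv n x w hx hw hsum
end

section
/- If f is 2-radical convex, then for all a, b ≥ 0: f(a) + f(b) + f(√(2ab)) ≤ f(a + b). -/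
/-! With `g x = f (√x)`, the three terms are `g (a²)`, `g (b²)`, `g (2ab)` and the right-hand side is
`g (a² + b² + 2ab)`, so the inequality is superadditivity of the convex function `g`, applied twice. -/

open Set

section Superadditive

variable {𝕜 : Type*} [Field 𝕜] [LinearOrder 𝕜] [IsStrictOrderedRing 𝕜] {f : 𝕜 → 𝕜}

lemma ConvexOn.map_mul_le_mul_of_map_zero_nonpos (hf : ConvexOn 𝕜 (Ici 0) f) (hf0 : f 0 ≤ 0)
    {t x : 𝕜} (ht₀ : 0 ≤ t) (ht₁ : t ≤ 1) (hx : 0 ≤ x) : f (t * x) ≤ t * f x := by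
  have key := hf.2 (mem_Ici.2 hx) (mem_Ici.2 le_rfl) ht₀ (sub_nonneg.2 ht₁) (add_sub_cancel t 1)
  simp only [smul_eq_mul, mul_zero, add_zero] at key
  nlinarith [mul_nonneg (sub_nonneg.2 ht₁) (neg_nonneg.2 hf0)]

lemma ConvexOn.add_le_map_add_of_map_zero_nonpos_s13 (hf : ConvexOn 𝕜 (Ici 0) f) (hf0 : f 0 ≤ 0)
    {x y : 𝕜} (hx : 0 ≤ x) (hy : 0 ≤ y) : f x + f y ≤ f (x + y) := by
  rcases (add_nonneg hx hy).eq_or_lt with hs | hs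
  · obtain rfl : x = 0 := by linarith
    obtain rfl : y = 0 := by linarith
    simpa using hf0
  have hxy : x / (x + y) ≤ 1 := (div_le_one hs).2 (le_add_of_nonneg_right hy)
  have hyx : y / (x + y) ≤ 1 := (div_le_one hs).2 (le_add_of_nonneg_left hx)
  have hx' := hf.map_mul_le_mul_of_map_zero_nonpos hf0 (div_nonneg hx hs.le) hxy hs.le
  have hy' := hf.map_mul_le_mul_of_map_zero_nonpos hf0 (div_nonneg hy hs.le) hyx hs.le
  rw [div_mul_cancel₀ _ hs.ne'] at hx' hy'
  calc f x + f y ≤ x / (x + y) * f (x + y) + y / (x + y) * f (x + y) := add_le_add hx' hy'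
    _ = f (x + y) := by rw [← add_mul, ← add_div, div_self hs.ne', one_mul]

end Superadditive

theorem two_radical_convex_superadditive_general (f : ℝ → ℝ)
    (hf0 : f 0 = 0)
    (hconv : ConvexOn ℝ (Set.Ici 0) (fun x => f (Real.sqrt x)))
    (a b : ℝ) (ha : 0 ≤ a) (hb : 0 ≤ b) :
    f a + f b + f (Real.sqrt (2 * a * b)) ≤ f (a + b) := by
  set g : ℝ → ℝ := fun x => f (Real.sqrt x) with hg
  have hg0 : g 0 ≤ 0 := by simp [hg, hf0]
  have hsq {x : ℝ} (hx : 0 ≤ x) : f x = g (x ^ 2) := by simp [hg, Real.sqrt_sq hx]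
  have hsum : f (a + b) = g (a ^ 2 + b ^ 2 + 2 * a * b) := by
    rw [hsq (add_nonneg ha hb)]
    ring_nf
  rw [hsq ha, hsq hb, hsum]
  calc g (a ^ 2) + g (b ^ 2) + g (2 * a * b)
      ≤ g (a ^ 2 + b ^ 2) + g (2 * a * b) := by
        gcongr
        exact hconv.add_le_map_add_of_map_zero_nonpos_s13 hg0 (sq_nonneg a) (sq_nonneg b)
    _ ≤ g (a ^ 2 + b ^ 2 + 2 * a * b) :=
        hconv.add_le_map_add_of_map_zero_nonpos_s13 hg0 (by positivity) (by positivity)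

theorem two_radical_convex_superadditive (f : ℝ → ℝ)
    (hmap : ∀ x ∈ Set.Ici (0:ℝ), 0 ≤ f x)
    (hcont : ContinuousOn f (Set.Ici 0))
    (hf0 : f 0 = 0)
    (hconv : ConvexOn ℝ (Set.Ici 0) (fun x => f (Real.sqrt x)))
    (a b : ℝ) (ha : 0 ≤ a) (hb : 0 ≤ b) :
    f a + f b + f (Real.sqrt (2 * a * b)) ≤ f (a + b) :=
  two_radical_convex_superadditive_general f hf0 hconv a b ha hb
end

section
/- If f is 2-radical convex and b > a > 0, then f((a+b)/2) + (2/(b−a)) ∫₀^{(b−a)/2} f(x) dx ≤ (1/(b−a)) ∫ₐᵇ f(x) dx. -/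
/-!
Write `g x = f (√x)`, so that `f x = g (x ^ 2)` for `x ≥ 0`. A convex `g` on `[0, ∞)` with
`g 0 = 0` is superadditive, and midpoint convexity at `(m ± t) ^ 2` gives, for `0 ≤ t ≤ m`,
`2 f(m) + 2 f(t) ≤ 2 g(m² + t²) ≤ f(m + t) + f(m - t)`.
Integrating over `t ∈ [0, (b - a)/2]` with `m = (a + b)/2`, the right side
folds onto `∫ₐᵇ f`.
-/

open Set intervalIntegral
open MeasureTheory (volume)

theorem ConvexOn.map_mul_le_mul_of_map_zero {g : ℝ → ℝ} (hg : ConvexOn ℝ (Ici 0) g)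
    (hg0 : g 0 = 0) {c x : ℝ} (hc₀ : 0 ≤ c) (hc₁ : c ≤ 1) (hx : 0 ≤ x) :
    g (c * x) ≤ c * g x := by
  simpa [hg0] using hg.2 (mem_Ici.2 hx) self_mem_Ici hc₀ (sub_nonneg.2 hc₁) (add_sub_cancel c 1)

theorem ConvexOn.add_le_map_add_of_map_zero_s14 {g : ℝ → ℝ} (hg : ConvexOn ℝ (Ici 0) g)
    (hg0 : g 0 = 0) {u v : ℝ} (hu : 0 ≤ u) (hv : 0 ≤ v) : g u + g v ≤ g (u + v) := by
  rcases (add_nonneg hu hv).eq_or_lt with huv | huv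
  · obtain ⟨rfl, rfl⟩ : u = 0 ∧ v = 0 := ⟨by linarith, by linarith⟩
    simp [hg0]
  have hu' := hg.map_mul_le_mul_of_map_zero hg0 (div_nonneg hu huv.le)
    (div_le_one_of_le₀ (by linarith) huv.le) huv.le
  have hv' := hg.map_mul_le_mul_of_map_zero hg0 (div_nonneg hv huv.le)
    (div_le_one_of_le₀ (by linarith) huv.le) huv.le
  rw [div_mul_cancel₀ _ huv.ne'] at hu' hv'
  calc g u + g v ≤ (u / (u + v) + v / (u + v)) * g (u + v) := by linarith
    _ = g (u + v) := by rw [← add_div, div_self huv.ne', one_mul]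

theorem two_mul_add_two_mul_le_of_convexOn_comp_sqrt {f : ℝ → ℝ} (hf0 : f 0 = 0)
    (hconv : ConvexOn ℝ (Ici 0) (fun x => f (√x))) {m t : ℝ} (ht : 0 ≤ t) (htm : t ≤ m) :
    2 * f m + 2 * f t ≤ f (m + t) + f (m - t) := by
  set g : ℝ → ℝ := fun x => f (√x)
  have hf_eq : ∀ x, 0 ≤ x → f x = g (x ^ 2) := fun x hx => by simp [g, Real.sqrt_sq hx]
  have hsuper : g (m ^ 2) + g (t ^ 2) ≤ g (m ^ 2 + t ^ 2) :=
    hconv.add_le_map_add_of_map_zero_s14 (by simp [g, hf0]) (sq_nonneg m) (sq_nonneg t)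
  have hmid : g (m ^ 2 + t ^ 2) ≤ 1 / 2 * g ((m + t) ^ 2) + 1 / 2 * g ((m - t) ^ 2) := by
    have := hconv.2 (mem_Ici.2 (sq_nonneg (m + t))) (mem_Ici.2 (sq_nonneg (m - t)))
      (by norm_num : (0 : ℝ) ≤ 1 / 2) (by norm_num : (0 : ℝ) ≤ 1 / 2) (by norm_num)
    rw [show m ^ 2 + t ^ 2 = (1 / 2 : ℝ) * (m + t) ^ 2 + 1 / 2 * (m - t) ^ 2 by ring]
    exact this
  rw [hf_eq m (ht.trans htm), hf_eq t ht, hf_eq (m + t) (by linarith), hf_eq (m - t) (by linarith)]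
  linarith

theorem self_mem_uIcc_sub_add (m h : ℝ) : m ∈ uIcc (m - h) (m + h) := by
  rw [mem_uIcc]
  rcases le_total 0 h with hh | hh
  · exact .inl ⟨by linarith, by linarith⟩
  · exact .inr ⟨by linarith, by linarith⟩

theorem IntervalIntegrable.comp_add_add_comp_sub {f : ℝ → ℝ} {m h : ℝ}
    (hf : IntervalIntegrable f volume (m - h) (m + h)) :
    IntervalIntegrable (fun t => f (m + t) + f (m - t)) volume 0 h := by
  have hl := hf.mono_set (uIcc_subset_uIcc left_mem_uIcc (self_mem_uIcc_sub_add m h))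
  have hr := hf.mono_set (uIcc_subset_uIcc (self_mem_uIcc_sub_add m h) right_mem_uIcc)
  refine .add ?_ ?_
  · simpa using hr.comp_add_left m
  · simpa using (hl.comp_sub_left m).symm

theorem integral_comp_add_add_comp_sub {f : ℝ → ℝ} {m h : ℝ}
    (hf : IntervalIntegrable f volume (m - h) (m + h)) :
    ∫ t in (0 : ℝ)..h, (f (m + t) + f (m - t)) = ∫ x in m - h..m + h, f x := by
  have hl := hf.mono_set (uIcc_subset_uIcc left_mem_uIcc (self_mem_uIcc_sub_add m h))
  have hr := hf.mono_set (uIcc_subset_uIcc (self_mem_uIcc_sub_add m h) right_mem_uIcc)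
  rw [integral_add (by simpa using hr.comp_add_left m) (by simpa using (hl.comp_sub_left m).symm),
    integral_comp_add_left, integral_comp_sub_left, add_zero, sub_zero, add_comm,
    integral_add_adjacent_intervals hl hr]

theorem two_radical_convex_HH_left_general (f : ℝ → ℝ)
    (hcont : ContinuousOn f (Set.Ici 0))
    (hf0 : f 0 = 0)
    (hconv : ConvexOn ℝ (Set.Ici 0) (fun x => f (Real.sqrt x)))
    (a b : ℝ) (ha : 0 < a) (hab : a < b) :
    f ((a + b) / 2) + (2 / (b - a)) * ∫ x in (0:ℝ)..((b - a) / 2), f x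
      ≤ (1 / (b - a)) * ∫ x in a..b, f x := by
  set m := (a + b) / 2 with hm
  set h := (b - a) / 2 with hh
  have hfab : IntervalIntegrable f volume (m - h) (m + h) := by
    refine (hcont.mono ?_).intervalIntegrable
    rw [uIcc_of_le (by linarith)]
    exact fun x hx => le_trans (by linarith) hx.1
  have hf0h : IntervalIntegrable f volume 0 h := by
    refine (hcont.mono ?_).intervalIntegrable
    rw [uIcc_of_le (by linarith)]
    exact fun x hx => hx.1
  have key : (b - a) * f m + 2 * ∫ x in (0 : ℝ)..h, f x ≤ ∫ x in a..b, f x :=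
    calc (b - a) * f m + 2 * ∫ x in (0 : ℝ)..h, f x
        = ∫ t in (0 : ℝ)..h, (2 * f m + 2 * f t) := by
          rw [integral_add intervalIntegrable_const (hf0h.const_mul 2),
            intervalIntegral.integral_const, integral_const_mul, smul_eq_mul, hh]
          ring
      _ ≤ ∫ t in (0 : ℝ)..h, (f (m + t) + f (m - t)) :=
          integral_mono_on (by linarith) (intervalIntegrable_const.add (hf0h.const_mul 2))
            hfab.comp_add_add_comp_sub fun t ht =>
              two_mul_add_two_mul_le_of_convexOn_comp_sqrt hf0 hconv ht.1 (by linarith [ht.2])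
      _ = ∫ x in a..b, f x := by
          rw [integral_comp_add_add_comp_sub hfab]
          congr 1 <;> ring
  have hba : 0 < b - a := by linarith
  rw [div_mul_eq_mul_div, div_mul_eq_mul_div, le_div_iff₀ hba, add_mul,
    div_mul_cancel₀ _ hba.ne']
  linarith

theorem two_radical_convex_HH_left (f : ℝ → ℝ)
    (hmap : ∀ x ∈ Set.Ici (0:ℝ), 0 ≤ f x)
    (hcont : ContinuousOn f (Set.Ici 0))
    (hf0 : f 0 = 0)
    (hconv : ConvexOn ℝ (Set.Ici 0) (fun x => f (Real.sqrt x)))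
    (a b : ℝ) (ha : 0 < a) (hab : a < b) :
    f ((a + b) / 2) + (2 / (b - a)) * ∫ x in (0:ℝ)..((b - a) / 2), f x
      ≤ (1 / (b - a)) * ∫ x in a..b, f x :=
  two_radical_convex_HH_left_general f hcont hf0 hconv a b ha hab
end

section
/- If f is 2-radical convex and b > a > 0, then (1/(b−a)) ∫ₐᵇ f(x) dx + (1/(b−a)) ∫₀^{(b−a)/2} 4x f(x)/√((b−a)² − 4x²) dx ≤ (f(a) + f(b))/2. -/
open Real MeasureTheory Set intervalIntegral

/-!
Write `g x = f (√x)` and parametrize `[a, b]` by `u θ = m - r cos θ`, with `m = (a + b) / 2`,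
`r = (b - a) / 2`, `θ ∈ [0, π]`. With `v θ = r sin θ` one has
`u² + v² = (1 + cos θ) / 2 · a² + (1 - cos θ) / 2 · b²`, and a convex `g` with `g 0 = 0` is
superadditive on `[0, ∞)`, so
`f u + f v ≤ g (u² + v²) ≤ (1 + cos θ) / 2 · f a + (1 - cos θ) / 2 · f b`.
Integrating against `sin θ dθ` over `[0, π]` gives the inequality: the substitution `x = u θ`
turns the first term into `2 / (b - a) ∫ₐᵇ f`, and `x = v θ` turns the second into the
singular integral.
-/

theorem ConvexOn.map_mul_le {g : ℝ → ℝ} (hg : ConvexOn ℝ (Ici 0) g) (hg0 : g 0 ≤ 0)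
    {t x : ℝ} (ht0 : 0 ≤ t) (ht1 : t ≤ 1) (hx : 0 ≤ x) : g (t * x) ≤ t * g x := by
  have h := hg.2 (mem_Ici.2 hx) self_mem_Ici ht0 (sub_nonneg.2 ht1) (add_sub_cancel t 1)
  simp only [smul_eq_mul, mul_zero, add_zero] at h
  nlinarith

theorem ConvexOn.add_le_map_add_s15 {g : ℝ → ℝ} (hg : ConvexOn ℝ (Ici 0) g) (hg0 : g 0 ≤ 0)
    {x y : ℝ} (hx : 0 ≤ x) (hy : 0 ≤ y) : g x + g y ≤ g (x + y) := by
  rcases (add_nonneg hx hy).eq_or_lt with hxy | hxy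
  · obtain rfl : x = 0 := by linarith
    obtain rfl : y = 0 := by linarith
    simpa using hg0
  have hx' := hg.map_mul_le hg0 (div_nonneg hx hxy.le)
    (div_le_one_of_le₀ (le_add_of_nonneg_right hy) hxy.le) hxy.le
  have hy' := hg.map_mul_le hg0 (div_nonneg hy hxy.le)
    (div_le_one_of_le₀ (le_add_of_nonneg_left hx) hxy.le) hxy.le
  rw [div_mul_cancel₀ _ hxy.ne'] at hx' hy'
  have hsum : x / (x + y) * g (x + y) + y / (x + y) * g (x + y) = g (x + y) := by
    field_simp
  linarith

theorem integral_eq_two_mul_integral_half_of_symm {φ : ℝ → ℝ} {s : ℝ}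
    (hφ : ∀ x, φ (s - x) = φ x) (hint : IntervalIntegrable φ volume 0 s) :
    ∫ x in 0..s, φ x = 2 * ∫ x in 0..s / 2, φ x := by
  have hsub : ∀ c d, c ∈ uIcc 0 s → d ∈ uIcc 0 s → IntervalIntegrable φ volume c d :=
    fun c d hc hd => hint.mono_set (uIcc_subset_uIcc hc hd)
  have hmid : s / 2 ∈ uIcc 0 s := by
    rcases le_total 0 s with hs | hs
    · rw [uIcc_of_le hs]; constructor <;> linarith
    · rw [uIcc_of_ge hs]; constructor <;> linarith
  have hreflect : ∫ x in s / 2..s, φ x = ∫ x in 0..s / 2, φ x := by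
    calc ∫ x in s / 2..s, φ x = ∫ x in s / 2..s, φ (s - x) := by simp only [hφ]
      _ = ∫ x in 0..s / 2, φ x := by
        rw [integral_comp_sub_left φ s, sub_self, show s - s / 2 = s / 2 by ring]
  rw [← integral_add_adjacent_intervals (hsub 0 _ left_mem_uIcc hmid)
    (hsub _ s hmid right_mem_uIcc), hreflect, two_mul]

theorem integral_sin_mul_convex_combination (A B : ℝ) :
    ∫ θ in 0..π, sin θ * ((1 + cos θ) / 2 * A + (1 - cos θ) / 2 * B) = A + B := by
  have hderiv : ∀ θ, HasDerivAt (fun θ => A / 2 * (-cos θ - cos θ ^ 2 / 2)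
      + B / 2 * (-cos θ + cos θ ^ 2 / 2))
      (sin θ * ((1 + cos θ) / 2 * A + (1 - cos θ) / 2 * B)) θ := by
    intro θ
    have h := hasDerivAt_cos θ
    exact (((h.neg.sub ((h.pow 2).div_const 2)).const_mul (A / 2)).add
      ((h.neg.add ((h.pow 2).div_const 2)).const_mul (B / 2))).congr_deriv (by ring)
  rw [integral_eq_sub_of_hasDerivAt (fun θ _ => hderiv θ)
    ((by fun_prop : Continuous _).intervalIntegrable _ _)]
  simp only [cos_pi, cos_zero]
  ring

theorem integral_eq_integral_sin_mul_comp_cos {f : ℝ → ℝ} {a b : ℝ} (hab : a ≤ b)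
    (hf : ContinuousOn f (Icc a b)) :
    ∫ x in a..b, f x
      = (b - a) / 2 * ∫ θ in 0..π, sin θ * f ((a + b) / 2 - (b - a) / 2 * cos θ) := by
  have hderiv : ∀ θ ∈ uIcc 0 π, HasDerivAt (fun θ => (a + b) / 2 - (b - a) / 2 * cos θ)
      ((b - a) / 2 * sin θ) θ := fun θ _ =>
    (((hasDerivAt_cos θ).const_mul ((b - a) / 2)).const_sub ((a + b) / 2)).congr_deriv (by ring)
  have hmaps : (fun θ => (a + b) / 2 - (b - a) / 2 * cos θ) '' uIcc 0 π ⊆ Icc a b := by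
    rintro _ ⟨θ, -, rfl⟩
    constructor <;> nlinarith [cos_le_one θ, neg_one_le_cos θ]
  have h := integral_deriv_smul_comp' hderiv (by fun_prop) (hf.mono hmaps)
  simp only [cos_zero, cos_pi, smul_eq_mul, Function.comp_def] at h
  rw [show (a + b) / 2 - (b - a) / 2 * 1 = a by ring,
    show (a + b) / 2 - (b - a) / 2 * -1 = b by ring] at h
  rw [← h, ← intervalIntegral.integral_const_mul]
  simp_rw [mul_assoc]

theorem image_mul_sin_Ioo {r : ℝ} (hr : 0 < r) :
    (fun θ => r * sin θ) '' Ioo 0 (π / 2) = Ioo 0 r := by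
  ext x
  constructor
  · rintro ⟨θ, ⟨hθ0, hθ1⟩, rfl⟩
    have hsin0 : 0 < sin θ := sin_pos_of_pos_of_lt_pi hθ0 (by linarith [pi_pos])
    have hsin1 : sin θ < 1 := by
      simpa using strictMonoOn_sin ⟨by linarith, hθ1.le⟩ ⟨by linarith [pi_pos], le_rfl⟩ hθ1
    exact ⟨by positivity, by nlinarith⟩
  · rintro ⟨hx0, hxr⟩
    have hd0 : 0 < x / r := by positivity
    have hd1 : x / r < 1 := (div_lt_one hr).2 hxr
    refine ⟨arcsin (x / r), ⟨arcsin_pos.2 hd0, arcsin_lt_pi_div_two.2 hd1⟩, ?_⟩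
    simp only [sin_arcsin (by linarith) hd1.le]
    field_simp

theorem integral_mul_div_sqrt_sq_sub_sq (f : ℝ → ℝ) {r : ℝ} (hr : 0 < r) :
    ∫ x in 0..r, x * f x / √(r ^ 2 - x ^ 2) = r * ∫ θ in 0..π / 2, sin θ * f (r * sin θ) := by
  have hderiv : ∀ θ ∈ Ioo 0 (π / 2),
      HasDerivWithinAt (fun θ => r * sin θ) (r * cos θ) (Ioo 0 (π / 2)) θ := fun θ _ =>
    ((hasDerivAt_sin θ).const_mul r).hasDerivWithinAt
  have hinj : InjOn (fun θ => r * sin θ) (Ioo 0 (π / 2)) := fun x hx y hy hxy =>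
    injOn_sin ⟨by linarith [hx.1, pi_pos], hx.2.le⟩ ⟨by linarith [hy.1, pi_pos], hy.2.le⟩
      (mul_left_cancel₀ hr.ne' hxy)
  have hcov := integral_image_eq_integral_abs_deriv_smul measurableSet_Ioo hderiv hinj
    (fun x => x * f x / √(r ^ 2 - x ^ 2))
  rw [image_mul_sin_Ioo hr] at hcov
  have hintegrand : EqOn
      (fun θ => |r * cos θ| • (r * sin θ * f (r * sin θ) / √(r ^ 2 - (r * sin θ) ^ 2)))
      (fun θ => r * (sin θ * f (r * sin θ))) (Ioo 0 (π / 2)) := by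
    intro θ hθ
    have hcos : 0 < cos θ := cos_pos_of_mem_Ioo ⟨by linarith [hθ.1, pi_pos], hθ.2⟩
    have hsq : r ^ 2 - (r * sin θ) ^ 2 = (r * cos θ) ^ 2 := by
      linear_combination -r ^ 2 * sin_sq_add_cos_sq θ
    simp only [smul_eq_mul]
    rw [hsq, sqrt_sq (by positivity), abs_of_pos (by positivity)]
    field_simp
  rw [integral_of_le hr.le, integral_Ioc_eq_integral_Ioo, hcov,
    setIntegral_congr_fun measurableSet_Ioo hintegrand, MeasureTheory.integral_const_mul,
    ← integral_Ioc_eq_integral_Ioo, ← integral_of_le (by positivity)]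

theorem intervalIntegrable_sin_mul_comp {f : ℝ → ℝ} {s : Set ℝ} (hf : ContinuousOn f s)
    {φ : ℝ → ℝ} (hφ : Continuous φ) (hmaps : ∀ θ ∈ Icc 0 π, φ θ ∈ s) :
    IntervalIntegrable (fun θ => sin θ * f (φ θ)) volume 0 π := by
  refine ContinuousOn.intervalIntegrable ?_
  rw [uIcc_of_le pi_pos.le]
  exact continuous_sin.continuousOn.mul (hf.comp hφ.continuousOn hmaps)

theorem integral_mul_div_sqrt_sq_sub_four_mul_sq {f : ℝ → ℝ} {c : ℝ} (hc : 0 < c)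
    (hf : ContinuousOn f (Icc 0 (c / 2))) :
    ∫ x in 0..c / 2, 4 * x * f x / √(c ^ 2 - 4 * x ^ 2)
      = c / 2 * ∫ θ in 0..π, sin θ * f (c / 2 * sin θ) := by
  have hscale : ∀ x, 4 * x * f x / √(c ^ 2 - 4 * x ^ 2)
      = 2 * (x * f x / √((c / 2) ^ 2 - x ^ 2)) := fun x => by
    rw [show c ^ 2 - 4 * x ^ 2 = 2 ^ 2 * ((c / 2) ^ 2 - x ^ 2) by ring,
      sqrt_mul (by positivity), sqrt_sq zero_le_two]
    ring
  have hint := intervalIntegrable_sin_mul_comp hf (φ := fun θ => c / 2 * sin θ) (by fun_prop)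
    fun θ hθ => ⟨mul_nonneg (by positivity) (sin_nonneg_of_nonneg_of_le_pi hθ.1 hθ.2),
      mul_le_of_le_one_right (by positivity) (sin_le_one θ)⟩
  rw [integral_eq_two_mul_integral_half_of_symm (by simp [sin_pi_sub]) hint, funext hscale,
    intervalIntegral.integral_const_mul, integral_mul_div_sqrt_sq_sub_sq f (by positivity)]
  ring

section TwoRadicalConvex

variable {f : ℝ → ℝ}

theorem map_add_map_le_of_sq_add_sq_eq (hconv : ConvexOn ℝ (Ici 0) (fun x => f √x))
    (hf0 : f 0 = 0) {a b u v p q : ℝ} (ha : 0 ≤ a) (hb : 0 ≤ b) (hu : 0 ≤ u) (hv : 0 ≤ v)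
    (hp : 0 ≤ p) (hq : 0 ≤ q) (hpq : p + q = 1) (h : u ^ 2 + v ^ 2 = p * a ^ 2 + q * b ^ 2) :
    f u + f v ≤ p * f a + q * f b := by
  have hg0 : f √0 ≤ 0 := by rw [sqrt_zero, hf0]
  rw [← sqrt_sq hu, ← sqrt_sq hv, ← sqrt_sq ha, ← sqrt_sq hb]
  calc f √(u ^ 2) + f √(v ^ 2) ≤ f √(u ^ 2 + v ^ 2) :=
        hconv.add_le_map_add_s15 hg0 (sq_nonneg u) (sq_nonneg v)
    _ = f √(p * a ^ 2 + q * b ^ 2) := by rw [h]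
    _ ≤ p * f √(a ^ 2) + q * f √(b ^ 2) := hconv.2 (sq_nonneg a) (sq_nonneg b) hp hq hpq

theorem map_add_map_le_of_sin_nonneg (hconv : ConvexOn ℝ (Ici 0) (fun x => f √x))
    (hf0 : f 0 = 0) {a b θ : ℝ} (ha : 0 ≤ a) (hab : a ≤ b) (hθ : 0 ≤ sin θ) :
    f ((a + b) / 2 - (b - a) / 2 * cos θ) + f ((b - a) / 2 * sin θ)
      ≤ (1 + cos θ) / 2 * f a + (1 - cos θ) / 2 * f b := by
  have hcos := cos_le_one θ
  have hcos' := neg_one_le_cos θ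
  refine map_add_map_le_of_sq_add_sq_eq hconv hf0 ha (ha.trans hab) (by nlinarith)
    (mul_nonneg (by linarith) hθ) (by linarith) (by linarith) (by ring) ?_
  linear_combination (b - a) ^ 2 / 4 * sin_sq_add_cos_sq θ

theorem integral_sin_mul_add_integral_sin_mul_le (hcont : ContinuousOn f (Ici 0))
    (hconv : ConvexOn ℝ (Ici 0) (fun x => f √x)) (hf0 : f 0 = 0) {a b : ℝ} (ha : 0 ≤ a)
    (hab : a ≤ b) :
    (∫ θ in 0..π, sin θ * f ((a + b) / 2 - (b - a) / 2 * cos θ))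
      + ∫ θ in 0..π, sin θ * f ((b - a) / 2 * sin θ) ≤ f a + f b := by
  have hint₁ := intervalIntegrable_sin_mul_comp hcont
    (φ := fun θ => (a + b) / 2 - (b - a) / 2 * cos θ) (by fun_prop) fun θ _ =>
      mem_Ici.2 (by nlinarith [mul_nonneg (sub_nonneg.2 hab) (sub_nonneg.2 (cos_le_one θ))])
  have hint₂ := intervalIntegrable_sin_mul_comp hcont (φ := fun θ => (b - a) / 2 * sin θ)
    (by fun_prop) fun θ hθ =>
      mul_nonneg (by linarith) (sin_nonneg_of_nonneg_of_le_pi hθ.1 hθ.2)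
  rw [← integral_add hint₁ hint₂, ← integral_sin_mul_convex_combination (f a) (f b)]
  refine integral_mono_on pi_pos.le (hint₁.add hint₂)
    (Continuous.intervalIntegrable ?_ _ _) fun θ hθ => ?_
  · fun_prop
  have hsin := sin_nonneg_of_nonneg_of_le_pi hθ.1 hθ.2
  rw [← mul_add]
  exact mul_le_mul_of_nonneg_left (map_add_map_le_of_sin_nonneg hconv hf0 ha hab hsin) hsin

end TwoRadicalConvex

theorem two_radical_convex_HH_right_general (f : ℝ → ℝ)
    (hcont : ContinuousOn f (Set.Ici 0))
    (hf0 : f 0 = 0)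
    (hconv : ConvexOn ℝ (Set.Ici 0) (fun x => f (Real.sqrt x)))
    (a b : ℝ) (ha : 0 < a) (hab : a < b) :
    (1 / (b - a)) * ∫ x in a..b, f x
      + (1 / (b - a)) * ∫ x in (0:ℝ)..((b - a) / 2),
          4 * x * f x / Real.sqrt ((b - a) ^ 2 - 4 * x ^ 2)
      ≤ (f a + f b) / 2 := by
  have hfab : ContinuousOn f (Icc a b) := hcont.mono fun x hx => ha.le.trans hx.1
  -- The binder of the first integral extends over the whole sum, whose second term is constant.
  rw [integral_add (hfab.intervalIntegrable_of_Icc hab.le) intervalIntegrable_const,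
    intervalIntegral.integral_const, smul_eq_mul, integral_eq_integral_sin_mul_comp_cos hab.le hfab,
    integral_mul_div_sqrt_sq_sub_four_mul_sq (sub_pos.2 hab) (hcont.mono fun _ hx => hx.1)]
  have hle := integral_sin_mul_add_integral_sin_mul_le hcont hconv hf0 ha.le hab.le
  have hba : b - a ≠ 0 := by linarith
  have hmean : ∀ A B : ℝ, A + B ≤ f a + f b →
      1 / (b - a) * ((b - a) / 2 * A + (b - a) * (1 / (b - a) * ((b - a) / 2 * B)))
        ≤ (f a + f b) / 2 := fun A B h => by
    field_simp
    linarith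
  exact hmean _ _ hle

theorem two_radical_convex_HH_right (f : ℝ → ℝ)
    (hmap : ∀ x ∈ Set.Ici (0:ℝ), 0 ≤ f x)
    (hcont : ContinuousOn f (Set.Ici 0))
    (hf0 : f 0 = 0)
    (hconv : ConvexOn ℝ (Set.Ici 0) (fun x => f (Real.sqrt x)))
    (a b : ℝ) (ha : 0 < a) (hab : a < b) :
    (1 / (b - a)) * ∫ x in a..b, f x
      + (1 / (b - a)) * ∫ x in (0:ℝ)..((b - a) / 2),
          4 * x * f x / Real.sqrt ((b - a) ^ 2 - 4 * x ^ 2)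
      ≤ (f a + f b) / 2 :=
  two_radical_convex_HH_right_general f hcont hf0 hconv a b ha hab
end

section
/- If f is 2-radical convex, then 3∫₀^{1/4} f(x) dx + ∫_{1/4}^{3/4} f(x) dx ≤ ∫_{3/4}^{1} f(x) dx. -/
/-!
With `g := f ∘ √·` convex and `g 0 = 0`, the chord slope `g t / t` is nondecreasing, i.e.
`z² f y ≤ y² f z` for `0 ≤ y ≤ z`. Since `3 x² + (x + h)² + (x + 2h)² ≤ (x + 3h)²` on `[0, h]`
and `f ≥ 0`, this gives `3 f x + f (x + h) + f (x + 2h) ≤ f (x + 3h)` pointwise there;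
integrating over `[0, 1/4]` gives the bound.
-/

open Set intervalIntegral
open MeasureTheory (volume)

theorem ConvexOn.mul_le_mul_of_map_zero_nonpos {𝕜 : Type*} [Field 𝕜] [LinearOrder 𝕜]
    [IsStrictOrderedRing 𝕜] {g : 𝕜 → 𝕜} (hg : ConvexOn 𝕜 (Ici 0) g) (hg0 : g 0 ≤ 0) {y z : 𝕜}
    (hy : 0 ≤ y) (hyz : y ≤ z) : z * g y ≤ y * g z := by
  rcases hy.eq_or_lt with rfl | hy
  · rw [zero_mul]
    exact mul_nonpos_of_nonneg_of_nonpos hyz hg0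
  rcases hyz.eq_or_lt with rfl | hyz
  · rfl
  have h := hg.secant_mono_aux1 self_mem_Ici (mem_Ici.2 (hy.trans hyz).le) hy hyz
  simp only [sub_zero] at h
  nlinarith [mul_nonpos_of_nonneg_of_nonpos (sub_nonneg.2 hyz.le) hg0]

theorem sq_mul_le_sq_mul_of_convexOn_comp_sqrt {f : ℝ → ℝ}
    (hf : ConvexOn ℝ (Ici 0) (fun x => f (√x))) (hf0 : f 0 ≤ 0) {y z : ℝ}
    (hy : 0 ≤ y) (hyz : y ≤ z) : z ^ 2 * f y ≤ y ^ 2 * f z := by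
  have h := hf.mul_le_mul_of_map_zero_nonpos (by simpa using hf0) (sq_nonneg y)
    (pow_le_pow_left₀ hy hyz 2)
  simpa only [Real.sqrt_sq hy, Real.sqrt_sq (hy.trans hyz)] using h

/-- The weights come from `3 x² + (x + h)² + (x + 2h)² = (x + 3h)² - 4 (h² - x²)`. -/
theorem three_mul_add_add_le_of_convexOn_comp_sqrt {f : ℝ → ℝ}
    (hf : ConvexOn ℝ (Ici 0) (fun x => f (√x))) (hf0 : f 0 ≤ 0) {h x : ℝ} (hh : 0 < h)
    (hx : x ∈ Icc 0 h) (hpos : 0 ≤ f (x + 3 * h)) :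
    3 * f x + f (x + h) + f (x + 2 * h) ≤ f (x + 3 * h) := by
  obtain ⟨hx0, hxh⟩ := hx
  have hz : 0 < x + 3 * h := by linarith
  have ratio : ∀ c, 0 ≤ c → c ≤ 3 * h →
      (x + 3 * h) ^ 2 * f (x + c) ≤ (x + c) ^ 2 * f (x + 3 * h) := fun c hc hc3 =>
    sq_mul_le_sq_mul_of_convexOn_comp_sqrt hf hf0 (by linarith) (by linarith)
  have h0 := ratio 0 le_rfl (by linarith)
  have h1 := ratio h (by linarith) (by linarith)
  have h2 := ratio (2 * h) (by linarith) (by linarith)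
  simp only [add_zero] at h0
  have hsq : 3 * x ^ 2 + (x + h) ^ 2 + (x + 2 * h) ^ 2 ≤ (x + 3 * h) ^ 2 := by nlinarith
  refine le_of_mul_le_mul_left ?_ (by positivity : 0 < (x + 3 * h) ^ 2)
  nlinarith [mul_le_mul_of_nonneg_right hsq hpos]

theorem intervalIntegrable_of_continuousOn_Ici {f : ℝ → ℝ} (hcont : ContinuousOn f (Ici 0))
    {a b : ℝ} (ha : 0 ≤ a) (hb : 0 ≤ b) : IntervalIntegrable f volume a b :=
  (hcont.mono fun _ hx => le_trans (le_min ha hb) hx.1).intervalIntegrable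

theorem three_mul_integral_add_integral_le_of_convexOn_comp_sqrt {f : ℝ → ℝ}
    (hf : ConvexOn ℝ (Ici 0) (fun x => f (√x))) (hf0 : f 0 ≤ 0)
    (hnonneg : ∀ x ∈ Ici (0 : ℝ), 0 ≤ f x) (hcont : ContinuousOn f (Ici 0)) {h : ℝ} (hh : 0 < h) :
    3 * (∫ x in 0..h, f x) + (∫ x in h..3 * h, f x) ≤ ∫ x in 3 * h..4 * h, f x := by
  have hshift : ∀ c, 0 ≤ c → IntervalIntegrable (fun x => f (x + c)) volume 0 h := fun c hc =>
    ((hcont.comp (continuous_add_const c).continuousOn fun x hx => by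
      rw [uIcc_of_le hh.le] at hx
      exact add_nonneg hx.1 hc).intervalIntegrable)
  have h0 := (intervalIntegrable_of_continuousOn_Ici hcont le_rfl hh.le).const_mul 3
  have h1 := hshift h hh.le
  have h2 := hshift (2 * h) (by positivity)
  calc 3 * (∫ x in 0..h, f x) + (∫ x in h..3 * h, f x)
      = ∫ x in 0..h, (3 * f x + f (x + h) + f (x + 2 * h)) := by
        rw [integral_add (h0.add h1) h2, integral_add h0 h1,
          integral_const_mul, integral_comp_add_right, integral_comp_add_right,
          ← integral_add_adjacent_intervals
            (intervalIntegrable_of_continuousOn_Ici hcont hh.le (by positivity : 0 ≤ 2 * h))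
            (intervalIntegrable_of_continuousOn_Ici hcont (by positivity)
              (by positivity : 0 ≤ 3 * h))]
        ring_nf
    _ ≤ ∫ x in 0..h, f (x + 3 * h) :=
        integral_mono_on hh.le ((h0.add h1).add h2) (hshift (3 * h) (by positivity)) fun x hx =>
          three_mul_add_add_le_of_convexOn_comp_sqrt hf hf0 hh hx
            (hnonneg _ (add_nonneg hx.1 (by positivity)))
    _ = ∫ x in 3 * h..4 * h, f x := by
        rw [integral_comp_add_right]
        ring_nf

theorem two_radical_convex_integral_bound (f : ℝ → ℝ)
    (hmap : ∀ x ∈ Set.Ici (0:ℝ), 0 ≤ f x)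
    (hcont : ContinuousOn f (Set.Ici 0))
    (hf0 : f 0 = 0)
    (hconv : ConvexOn ℝ (Set.Ici 0) (fun x => f (Real.sqrt x))) :
    3 * ∫ x in (0:ℝ)..(1/4 : ℝ), f x + ∫ x in (1/4 : ℝ)..(3/4 : ℝ), f x
      ≤ ∫ x in (3/4 : ℝ)..(1 : ℝ), f x := by
  have key := three_mul_integral_add_integral_le_of_convexOn_comp_sqrt hconv hf0.le hmap hcont
    (by norm_num : (0 : ℝ) < 1 / 4)
  have hmid : 0 ≤ ∫ x in (1/4 : ℝ)..(3/4 : ℝ), f x :=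
    integral_nonneg (by norm_num) fun x hx => hmap x (le_trans (by norm_num) hx.1)
  -- The outer integral extends over the `+`, so the middle integral enters with weight 3/4.
  rw [integral_add (intervalIntegrable_of_continuousOn_Ici hcont le_rfl (by norm_num))
    intervalIntegrable_const, integral_const, smul_eq_mul]
  norm_num at key ⊢
  linarith
end

section
/- If f is p-radical convex for some p ≥ 1, then for every x ≥ 0: ∫₀ˣ f(t) dt ≤ (x/(p+1)) f(x). -/
/-!
With `g s = f (s ^ (1 / p))` convex and `g 0 = 0`, convexity along the segment from `0` gives
`g (λ s) ≤ λ g s`; taking `s = x ^ p` and `λ = (t / x) ^ p` this reads `f t ≤ (t / x) ^ p * f x`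
for `0 ≤ t ≤ x`, and integrating over `[0, x]` yields the factor `∫₀ˣ (t / x) ^ p dt = x / (p + 1)`.
-/

open Set

theorem ConvexOn.map_smul_le_smul {𝕜 E β : Type*} [Ring 𝕜] [PartialOrder 𝕜] [IsOrderedRing 𝕜]
    [AddCommGroup E] [Module 𝕜 E] [AddCommMonoid β] [PartialOrder β] [Module 𝕜 β]
    {s : Set E} {g : E → β} (hg : ConvexOn 𝕜 s g) (h0 : (0 : E) ∈ s) (hg0 : g 0 = 0)
    {y : E} (hy : y ∈ s) {a : 𝕜} (ha0 : 0 ≤ a) (ha1 : a ≤ 1) : g (a • y) ≤ a • g y := by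
  simpa [hg0] using hg.2 h0 hy (sub_nonneg.2 ha1) ha0 (sub_add_cancel 1 a)

theorem le_div_rpow_mul_of_convexOn_comp_rpow_one_div {f : ℝ → ℝ} {p : ℝ} (hp : 0 < p)
    (hf0 : f 0 = 0) (hconv : ConvexOn ℝ (Ici 0) (fun x => f (x ^ (1 / p)))) {t x : ℝ} (ht : 0 ≤ t)
    (htx : t ≤ x) : f t ≤ (t / x) ^ p * f x := by
  have hx : 0 ≤ x := ht.trans htx
  have hroot : ∀ {u : ℝ}, 0 ≤ u → (u ^ p) ^ (1 / p) = u := fun hu => by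
    rw [← Real.rpow_mul hu, mul_one_div_cancel hp.ne', Real.rpow_one]
  have key := hconv.map_smul_le_smul self_mem_Ici (by simp [Real.zero_rpow, hp.ne', hf0])
    (Real.rpow_nonneg hx p) (Real.rpow_nonneg (div_nonneg ht hx) p)
    (Real.rpow_le_one (div_nonneg ht hx) (div_le_one_of_le₀ htx hx) hp.le)
  rwa [smul_eq_mul, smul_eq_mul, ← Real.mul_rpow (div_nonneg ht hx) hx, hroot hx,
    hroot (mul_nonneg (div_nonneg ht hx) hx),
    div_mul_cancel_of_imp fun h => le_antisymm (h ▸ htx) ht] at key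

theorem integral_div_rpow {p x : ℝ} (hp : -1 < p) (hx : 0 ≤ x) :
    ∫ t in (0 : ℝ)..x, (t / x) ^ p = x / (p + 1) := by
  rcases hx.eq_or_lt with rfl | hx
  · simp
  rw [intervalIntegral.integral_comp_div (fun t => t ^ p) hx.ne', zero_div, div_self hx.ne',
    integral_rpow (Or.inl hp), Real.one_rpow, Real.zero_rpow (by linarith), smul_eq_mul]
  ring

theorem p_radical_convex_average_general (f : ℝ → ℝ) (p : ℝ) (hp : 1 ≤ p)
    (hcont : ContinuousOn f (Set.Ici 0))
    (hf0 : f 0 = 0)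
    (hconv : ConvexOn ℝ (Set.Ici 0) (fun x => f (x ^ (1/p))))
    (x : ℝ) (hx : 0 ≤ x) :
    ∫ t in (0:ℝ)..x, f t ≤ x / (p + 1) * f x := by
  have hp0 : 0 < p := one_pos.trans_le hp
  have hf_int : IntervalIntegrable f MeasureTheory.volume 0 x :=
    (hcont.mono fun t ht => (uIcc_of_le hx ▸ ht).1).intervalIntegrable
  have hbound_int : IntervalIntegrable (fun t => (t / x) ^ p * f x) MeasureTheory.volume 0 x :=
    ((continuous_id.div_const x).rpow_const fun _ => Or.inr hp0.le).mul_const _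
      |>.intervalIntegrable 0 x
  calc ∫ t in (0:ℝ)..x, f t ≤ ∫ t in (0:ℝ)..x, (t / x) ^ p * f x :=
        intervalIntegral.integral_mono_on hx hf_int hbound_int fun t ht =>
          le_div_rpow_mul_of_convexOn_comp_rpow_one_div hp0 hf0 hconv ht.1 ht.2
    _ = x / (p + 1) * f x := by
        rw [intervalIntegral.integral_mul_const, integral_div_rpow (by linarith) hx]

theorem p_radical_convex_average (f : ℝ → ℝ) (p : ℝ) (hp : 1 ≤ p)
    (hmap : ∀ x ∈ Set.Ici (0:ℝ), 0 ≤ f x)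
    (hcont : ContinuousOn f (Set.Ici 0))
    (hf0 : f 0 = 0)
    (hconv : ConvexOn ℝ (Set.Ici 0) (fun x => f (x ^ (1/p))))
    (x : ℝ) (hx : 0 ≤ x) :
    ∫ t in (0:ℝ)..x, f t ≤ x / (p + 1) * f x :=
  p_radical_convex_average_general f p hp hcont hf0 hconv x hx
end

section
/- If f : [0,∞) → [0,∞) is continuous with f(0) = 0 and f is p-radical convex for every p ≥ 1, then f is identically zero. -/
/-! Convexity of `x ↦ f (x ^ (1/p))` together with `f 0 = 0` gives `f (s x) ≤ s ^ p f x` for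
`s ∈ [0, 1]`. With `s = 1/2` this bounds `f x` by `2⁻ᵖ f (2x)`, which tends to `0` as `p → ∞`. -/

open Filter Set

theorem ConvexOn.map_smul_le_smul_of_map_zero {𝕜 E β : Type*} [Ring 𝕜] [PartialOrder 𝕜]
    [IsOrderedRing 𝕜] [AddCommMonoid E] [AddCommMonoid β] [PartialOrder β] [Module 𝕜 E]
    [Module 𝕜 β] [IsOrderedAddMonoid β] {s : Set E} {f : E → β} (hf : ConvexOn 𝕜 s f)
    (h0 : (0 : E) ∈ s) (hf0 : f 0 = 0) {x : E} (hx : x ∈ s) {t : 𝕜} (ht0 : 0 ≤ t)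
    (ht1 : t ≤ 1) : f (t • x) ≤ t • f x := by
  simpa [hf0] using hf.2 h0 hx (sub_nonneg.2 ht1) ht0 (sub_add_cancel 1 t)

theorem map_mul_le_rpow_mul_of_convexOn_comp_rpow {f : ℝ → ℝ} (hf0 : f 0 = 0) {p : ℝ}
    (hp : 0 < p) (hconv : ConvexOn ℝ (Ici 0) fun x => f (x ^ (1 / p))) {x s : ℝ} (hx : 0 ≤ x)
    (hs0 : 0 ≤ s) (hs1 : s ≤ 1) : f (s * x) ≤ s ^ p * f x := by
  have root_pow {y : ℝ} (hy : 0 ≤ y) : (y ^ p) ^ (1 / p) = y := by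
    rw [one_div, Real.rpow_rpow_inv hy hp.ne']
  have h := hconv.map_smul_le_smul_of_map_zero self_mem_Ici (by simp [hp.ne', hf0])
    (mem_Ici.2 (Real.rpow_nonneg hx p)) (Real.rpow_nonneg hs0 p)
    (Real.rpow_le_one hs0 hs1 hp.le)
  rwa [smul_eq_mul, smul_eq_mul, ← Real.mul_rpow hs0 hx, root_pow (mul_nonneg hs0 hx),
    root_pow hx] at h

theorem all_p_radical_convex_zero_general (f : ℝ → ℝ)
    (hmap : ∀ x ∈ Set.Ici (0:ℝ), 0 ≤ f x)
    (hf0 : f 0 = 0)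
    (hconv : ∀ p : ℝ, 1 ≤ p → ConvexOn ℝ (Set.Ici 0) (fun x => f (x ^ (1/p)))) :
    ∀ x ∈ Set.Ici (0:ℝ), f x = 0 := by
  intro x hx
  have hx0 : (0 : ℝ) ≤ x := hx
  have bound : ∀ᶠ p : ℝ in atTop, f x ≤ (1 / 2 : ℝ) ^ p * f (2 * x) := by
    filter_upwards [eventually_ge_atTop (1 : ℝ)] with p hp
    simpa [← mul_assoc] using map_mul_le_rpow_mul_of_convexOn_comp_rpow hf0
      (zero_lt_one.trans_le hp) (hconv p hp) (by positivity : (0 : ℝ) ≤ 2 * x)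
      (by norm_num : (0 : ℝ) ≤ 1 / 2) (by norm_num)
  have decay : Tendsto (fun p : ℝ => (1 / 2 : ℝ) ^ p * f (2 * x)) atTop (nhds 0) := by
    simpa using (tendsto_rpow_atTop_of_base_lt_one (1 / 2) (by norm_num) (by norm_num)).mul_const
      (f (2 * x))
  exact le_antisymm (ge_of_tendsto decay bound) (hmap x hx)

theorem all_p_radical_convex_zero (f : ℝ → ℝ)
    (hmap : ∀ x ∈ Set.Ici (0:ℝ), 0 ≤ f x)
    (hcont : ContinuousOn f (Set.Ici 0))
    (hf0 : f 0 = 0)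
    (hconv : ∀ p : ℝ, 1 ≤ p → ConvexOn ℝ (Set.Ici 0) (fun x => f (x ^ (1/p)))) :
    ∀ x ∈ Set.Ici (0:ℝ), f x = 0 :=
  all_p_radical_convex_zero_general f hmap hf0 hconv
end

section
/- If f is 4-radical convex, then for all a, b ≥ 0 and t ∈ [0,1]: f((1−t)a + tb) + f(√(t(1−t)) |a−b|) + f((2t(1−t))^{1/4} √(|a−b| ((1−t)a + tb))) ≤ (1−t) f(a) + t f(b). -/
/-!
Put `g x = f (x ^ (1/4))` and `m = (1-t) a + t b`. Squaring the variance identity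
`(1-t) a² + t b² = m² + t(1-t)(a-b)²` shows that the fourth powers of the three arguments of
`f` on the left add up to `((1-t) a² + t b²)²`, which is at most `(1-t) a⁴ + t b⁴`. A convex
`g` with `g 0 = 0` is superadditive on `[0, ∞)`, and nondecreasing there since `g ≥ 0 = g 0`;
so the left side is at most `g ((1-t) a⁴ + t b⁴)`, and convexity of `g` finishes.
-/

open Set

section ConvexOnIci

variable {𝕜 β : Type*} [Field 𝕜] [LinearOrder 𝕜] [IsStrictOrderedRing 𝕜]
  [AddCommMonoid β] [LinearOrder β] [IsOrderedCancelAddMonoid β] [Module 𝕜 β]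
  [PosSMulStrictMono 𝕜 β]

theorem ConvexOn.monotoneOn_Ici_of_isMinOn_s19 {f : 𝕜 → β} {a : 𝕜}
    (hf : ConvexOn 𝕜 (Ici a) f) (hmin : IsMinOn f (Ici a) a) : MonotoneOn f (Ici a) := by
  intro x hx y hy hxy
  rcases (mem_Ici.1 hx).eq_or_lt with rfl | hax
  · exact hmin hy
  · exact hf.le_right_of_left_le'' self_mem_Ici hy hax hxy (hmin hx)

end ConvexOnIci

section ConvexOnNonneg

variable {g : ℝ → ℝ}

theorem ConvexOn.map_mul_le_mul_of_map_zero_nonpos_s19 (hg : ConvexOn ℝ (Ici 0) g) (h0 : g 0 ≤ 0)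
    {c x : ℝ} (hc0 : 0 ≤ c) (hc1 : c ≤ 1) (hx : 0 ≤ x) : g (c * x) ≤ c * g x := by
  have h := hg.2 (mem_Ici.2 hx) self_mem_Ici hc0 (sub_nonneg.2 hc1) (add_sub_cancel c 1)
  simp only [smul_eq_mul, mul_zero, add_zero] at h
  nlinarith

theorem ConvexOn.add_le_map_add_of_map_zero_nonpos_s19 (hg : ConvexOn ℝ (Ici 0) g) (h0 : g 0 ≤ 0)
    {u v : ℝ} (hu : 0 ≤ u) (hv : 0 ≤ v) : g u + g v ≤ g (u + v) := by
  rcases (add_nonneg hu hv).eq_or_lt with huv | huv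
  · obtain ⟨rfl, rfl⟩ : u = 0 ∧ v = 0 := ⟨by linarith, by linarith⟩
    simpa using h0
  have key {x : ℝ} (hx : 0 ≤ x) (hxw : x ≤ u + v) : g x ≤ x / (u + v) * g (u + v) := by
    simpa [div_mul_cancel₀ x huv.ne'] using hg.map_mul_le_mul_of_map_zero_nonpos_s19 h0
      (div_nonneg hx huv.le) ((div_le_one huv).2 hxw) huv.le
  calc g u + g v ≤ u / (u + v) * g (u + v) + v / (u + v) * g (u + v) :=
        add_le_add (key hu (by linarith)) (key hv (by linarith))
    _ = g (u + v) := by rw [← add_mul, ← add_div, div_self huv.ne', one_mul]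

end ConvexOnNonneg

theorem Real.pow_four_rpow_one_div_four {x : ℝ} (hx : 0 ≤ x) :
    (x ^ 4) ^ ((1 : ℝ) / 4) = x := by
  simpa using Real.pow_rpow_inv_natCast hx four_ne_zero

theorem Real.rpow_one_div_four_pow_four {x : ℝ} (hx : 0 ≤ x) :
    (x ^ ((1 : ℝ) / 4)) ^ 4 = x := by
  simpa using Real.rpow_inv_natCast_pow hx four_ne_zero

theorem Real.sqrt_pow_four {x : ℝ} (hx : 0 ≤ x) : √x ^ 4 = x ^ 2 := by
  rw [show (4 : ℕ) = 2 * 2 from rfl, pow_mul, Real.sq_sqrt hx]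

theorem weighted_sq_mean_eq_sq_add (a b t : ℝ) :
    (1 - t) * a ^ 2 + t * b ^ 2 = ((1 - t) * a + t * b) ^ 2 + t * (1 - t) * (a - b) ^ 2 := by
  ring

theorem pow_four_add_pow_four_add_eq_sq (a b t : ℝ) :
    ((1 - t) * a + t * b) ^ 4 + (t * (1 - t)) ^ 2 * |a - b| ^ 4
      + 2 * t * (1 - t) * (|a - b| * ((1 - t) * a + t * b)) ^ 2
      = ((1 - t) * a ^ 2 + t * b ^ 2) ^ 2 := by
  have habs := sq_abs (a - b)
  rw [weighted_sq_mean_eq_sq_add]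
  linear_combination ((t * (1 - t)) ^ 2 * (|a - b| ^ 2 + (a - b) ^ 2)
    + 2 * t * (1 - t) * ((1 - t) * a + t * b) ^ 2) * habs

theorem sq_weighted_sq_mean_le {a b t : ℝ} (ht0 : 0 ≤ t) (ht1 : t ≤ 1) :
    ((1 - t) * a ^ 2 + t * b ^ 2) ^ 2 ≤ (1 - t) * a ^ 4 + t * b ^ 4 := by
  simpa [← pow_mul] using (convexOn_pow 2).2 (sq_nonneg a) (sq_nonneg b) (sub_nonneg.2 ht1) ht0
    (sub_add_cancel 1 t)

theorem four_radical_convex_refinement_general (f : ℝ → ℝ)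
    (hmap : ∀ x ∈ Set.Ici (0:ℝ), 0 ≤ f x)
    (hf0 : f 0 = 0)
    (hconv : ConvexOn ℝ (Set.Ici 0) (fun x => f (x ^ ((1:ℝ)/4))))
    (a b : ℝ) (ha : 0 ≤ a) (hb : 0 ≤ b) (t : ℝ) (ht : t ∈ Set.Icc (0:ℝ) 1) :
    f ((1 - t) * a + t * b) + f (Real.sqrt (t * (1 - t)) * |a - b|)
      + f ((2 * t * (1 - t)) ^ ((1:ℝ)/4) * Real.sqrt (|a - b| * ((1 - t) * a + t * b)))
      ≤ (1 - t) * f a + t * f b := by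
  obtain ⟨ht0, ht1⟩ := ht
  set g : ℝ → ℝ := fun x => f (x ^ ((1:ℝ)/4))
  have hg0 : g 0 = 0 := by simp [g, hf0]
  have hmin : IsMinOn g (Ici 0) 0 := isMinOn_iff.2 fun x hx => by
    rw [hg0]; exact hmap _ (Real.rpow_nonneg hx _)
  have hfg : ∀ {x}, 0 ≤ x → f x = g (x ^ 4) := fun hx => by
    simp only [g, Real.pow_four_rpow_one_div_four hx]
  set m := (1 - t) * a + t * b
  have hm : 0 ≤ m := by positivity
  have htt : 0 ≤ t * (1 - t) := mul_nonneg ht0 (sub_nonneg.2 ht1)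
  have h2tt : 0 ≤ 2 * t * (1 - t) := by linarith
  have hsum {u v : ℝ} (hu : 0 ≤ u) (hv : 0 ≤ v) : g u + g v ≤ g (u + v) :=
    hconv.add_le_map_add_of_map_zero_nonpos_s19 hg0.le hu hv
  rw [hfg hm, hfg (by positivity), hfg (by positivity), hfg ha, hfg hb,
    mul_pow, mul_pow, Real.sqrt_pow_four htt, Real.rpow_one_div_four_pow_four h2tt,
    Real.sqrt_pow_four (by positivity)]
  calc g (m ^ 4) + g ((t * (1 - t)) ^ 2 * |a - b| ^ 4)
        + g (2 * t * (1 - t) * (|a - b| * m) ^ 2)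
      ≤ g (m ^ 4 + (t * (1 - t)) ^ 2 * |a - b| ^ 4 + 2 * t * (1 - t) * (|a - b| * m) ^ 2) :=
        (add_le_add (hsum (by positivity) (by positivity)) le_rfl).trans
          (hsum (by positivity) (mul_nonneg h2tt (sq_nonneg _)))
    _ = g (((1 - t) * a ^ 2 + t * b ^ 2) ^ 2) := by rw [pow_four_add_pow_four_add_eq_sq]
    _ ≤ g ((1 - t) * a ^ 4 + t * b ^ 4) :=
        hconv.monotoneOn_Ici_of_isMinOn_s19 hmin (mem_Ici.2 (sq_nonneg _))
          (mem_Ici.2 (by positivity)) (sq_weighted_sq_mean_le ht0 ht1)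
    _ ≤ (1 - t) * g (a ^ 4) + t * g (b ^ 4) :=
        hconv.2 (pow_nonneg ha 4) (pow_nonneg hb 4) (sub_nonneg.2 ht1) ht0 (sub_add_cancel 1 t)

theorem four_radical_convex_refinement (f : ℝ → ℝ)
    (hmap : ∀ x ∈ Set.Ici (0:ℝ), 0 ≤ f x)
    (hcont : ContinuousOn f (Set.Ici 0))
    (hf0 : f 0 = 0)
    (hconv : ConvexOn ℝ (Set.Ici 0) (fun x => f (x ^ ((1:ℝ)/4))))
    (a b : ℝ) (ha : 0 ≤ a) (hb : 0 ≤ b) (t : ℝ) (ht : t ∈ Set.Icc (0:ℝ) 1) :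
    f ((1 - t) * a + t * b) + f (Real.sqrt (t * (1 - t)) * |a - b|)
      + f ((2 * t * (1 - t)) ^ ((1:ℝ)/4) * Real.sqrt (|a - b| * ((1 - t) * a + t * b)))
      ≤ (1 - t) * f a + t * f b :=
  four_radical_convex_refinement_general f hmap hf0 hconv a b ha hb t ht
end
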